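/- arXiv:1607.05298 — 9 statements merged into one kernel-verified Lean document; each statement's English description precedes it below -/
import Mathlib

section
/- For any quasi-metric space (X,d) and formal balls (x,r), (y,s) ∈ BX: if (x,r) is way below (y,s) in the poset (BX, ⊑_d), then d(x,y) < r - s. -/
open scoped NNReal ENNReal

attribute [local instance] Classical.propDecidable

universe u

structure QuasiMetric (X : Type u) where
  d : X → X → ℝ≥0
  eq_iff : ∀ x y, (d x y = 0 ∧ d y x = 0) ↔ x = y
  triangle : ∀ x y z, d x y ≤ d x z + d z y

/-- The order on formal balls: `(x,r) ⊑ (y,s)` iff `d x y ≤ r - s` (real subtraction). -/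
def BallLE {X : Type u} (d : X → X → ℝ≥0) (b c : X × ℝ≥0) : Prop :=
  (d b.1 c.1 : ℝ) ≤ (b.2 : ℝ) - (c.2 : ℝ)

def IsUpperBound {β : Type*} (le : β → β → Prop) (D : Set β) (u : β) : Prop :=
  ∀ a ∈ D, le a u

def IsLub' {β : Type*} (le : β → β → Prop) (D : Set β) (u : β) : Prop :=
  IsUpperBound le D u ∧ ∀ v, IsUpperBound le D v → le u v

def DirectedSubset {β : Type*} (le : β → β → Prop) (D : Set β) : Prop :=
  D.Nonempty ∧ ∀ a ∈ D, ∀ b ∈ D, ∃ c ∈ D, le a c ∧ le b c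

/-- `a` is way below `b`. -/
def WayBelow {β : Type*} (le : β → β → Prop) (a b : β) : Prop :=
  ∀ D : Set β, DirectedSubset le D → ∀ s, IsLub' le D s → le b s → ∃ u ∈ D, le a u

def LeftKCauchyNet {X : Type u} {Λ : Type*} (d : X → X → ℝ≥0) (le : Λ → Λ → Prop)
    (f : Λ → X) : Prop :=
  ∀ ε : ℝ≥0, 0 < ε → ∃ a, ∀ b c, le a b → le b c → d (f b) (f c) < ε

/-- `x` is a Yoneda-limit of the net `f`: for all `y`, `d x y = inf_a sup_{b ≥ a} d (f b) y`
(computed in `ℝ≥0∞` so that the inf/sup always exist). -/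
def IsYonedaLimit {X : Type u} {Λ : Type*} (d : X → X → ℝ≥0) (le : Λ → Λ → Prop)
    (f : Λ → X) (x : X) : Prop :=
  ∀ y, (d x y : ℝ≥0∞) = ⨅ a : Λ, ⨆ b : Λ, ⨆ _ : le a b, (d (f b) y : ℝ≥0∞)

theorem stmt4 {X : Type u} (Q : QuasiMetric X) (b c : X × ℝ≥0)
    (h : WayBelow (BallLE Q.d) b c) :
    (Q.d b.1 c.1 : ℝ) < (b.2 : ℝ) - (c.2 : ℝ) := by
  have hdd : Q.d c.1 c.1 = 0 := ((Q.eq_iff c.1 c.1).mpr rfl).1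
  set D : Set (X × ℝ≥0) := {p | ∃ ε : ℝ≥0, 0 < ε ∧ p = (c.1, c.2 + ε)} with hD
  have hdir : DirectedSubset (BallLE Q.d) D := by
    constructor
    · exact ⟨(c.1, c.2 + 1), 1, one_pos, rfl⟩
    · rintro a ⟨ε1, hε1, rfl⟩ a' ⟨ε2, hε2, rfl⟩
      refine ⟨(c.1, c.2 + min ε1 ε2), ⟨min ε1 ε2, lt_min hε1 hε2, rfl⟩, ?_, ?_⟩ <;>
      · simp only [BallLE, hdd]
        push_cast
        simp [min_le_left, min_le_right]
  have hlub : IsLub' (BallLE Q.d) D c := by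
    constructor
    · rintro a ⟨ε, hε, rfl⟩
      simp only [BallLE, hdd]
      push_cast
      simp [hε.le]
    · intro v hv
      have key : ∀ ε : ℝ, 0 < ε → (Q.d c.1 v.1 : ℝ) ≤ (c.2 : ℝ) - (v.2 : ℝ) + ε := by
        intro ε hε
        have := hv (c.1, c.2 + ε.toNNReal) ⟨ε.toNNReal, by simpa using hε, rfl⟩
        simp only [BallLE] at this ⊢
        push_cast at this
        rw [Real.coe_toNNReal _ hε.le] at this
        linarith
      have := le_of_forall_pos_le_add key
      exact this
  have hcc : BallLE Q.d c c := by simp [BallLE, hdd]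
  obtain ⟨u, ⟨ε, hε, rfl⟩, hu⟩ := h D hdir c hlub hcc
  simp only [BallLE] at hu
  push_cast at hu
  have : (0:ℝ) < ε := hε
  linarith
end

section
/- Let (X,d) be a quasi-metric space and (x,r) ∈ BX such that (x, r+s) ≪_d (x,r) for all s > 0. Then the set ⇓(x,r) = {b ∈ BX : b ≪_d (x,r)} is directed and (x,r) is its least upper bound. -/
open scoped NNReal ENNReal

attribute [local instance] Classical.propDecidable

universe u

theorem stmt5 {X : Type u} (Q : QuasiMetric X) (x : X) (r : ℝ≥0)
    (h : ∀ s : ℝ≥0, 0 < s → WayBelow (BallLE Q.d) (x, r + s) (x, r)) :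
    DirectedSubset (BallLE Q.d) {b | WayBelow (BallLE Q.d) b (x, r)} ∧
    IsLub' (BallLE Q.d) {b | WayBelow (BallLE Q.d) b (x, r)} (x, r) := by
  have dxx : Q.d x x = 0 := ((Q.eq_iff x x).mpr rfl).1
  have hrefl : ∀ b : X × ℝ≥0, BallLE Q.d b b := by
    intro b
    simp [BallLE, ((Q.eq_iff b.1 b.1).mpr rfl).1]
  have htrans : ∀ a b c, BallLE Q.d a b → BallLE Q.d b c → BallLE Q.d a c := by
    intro a b c hab hbc
    have h1 := Q.triangle a.1 c.1 b.1
    have h2 : (Q.d a.1 c.1 : ℝ) ≤ (Q.d a.1 b.1 : ℝ) + Q.d b.1 c.1 := by exact_mod_cast h1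
    unfold BallLE at *
    linarith
  set E : Set (X × ℝ≥0) := {b | ∃ s : ℝ≥0, 0 < s ∧ b = (x, r + s)} with hE
  have hEdir : DirectedSubset (BallLE Q.d) E := by
    refine ⟨⟨(x, r + 1), ⟨1, one_pos, rfl⟩⟩, ?_⟩
    rintro a ⟨s, hs, rfl⟩ b ⟨t, ht, rfl⟩
    refine ⟨(x, r + min s t), ⟨min s t, lt_min hs ht, rfl⟩, ?_, ?_⟩
    · show (Q.d x x : ℝ) ≤ (↑(r + s) : ℝ) - ↑(r + min s t)
      rw [dxx]
      have : (min s t : ℝ) ≤ (s : ℝ) := by exact_mod_cast min_le_left s t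
      push_cast
      linarith
    · show (Q.d x x : ℝ) ≤ (↑(r + t) : ℝ) - ↑(r + min s t)
      rw [dxx]
      have : (min s t : ℝ) ≤ (t : ℝ) := by exact_mod_cast min_le_right s t
      push_cast
      linarith
  have hEub : IsUpperBound (BallLE Q.d) E (x, r) := by
    rintro a ⟨s, hs, rfl⟩
    show (Q.d x x : ℝ) ≤ (↑(r + s) : ℝ) - ↑r
    rw [dxx]; push_cast
    have : (0 : ℝ) ≤ s := s.coe_nonneg
    linarith
  have hElub : IsLub' (BallLE Q.d) E (x, r) := by
    refine ⟨hEub, fun v hv => ?_⟩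
    show (Q.d x v.1 : ℝ) ≤ (r : ℝ) - v.2
    refine le_of_forall_pos_le_add ?_
    intro ε hε
    have hv' := hv (x, r + ε.toNNReal) ⟨ε.toNNReal, by simp [Real.toNNReal_pos, hε], rfl⟩
    have : (Q.d x v.1 : ℝ) ≤ (↑(r + ε.toNNReal) : ℝ) - v.2 := hv'
    rw [NNReal.coe_add, Real.coe_toNNReal _ hε.le] at this
    linarith
  have key : ∀ a, WayBelow (BallLE Q.d) a (x, r) →
      ∃ s : ℝ≥0, 0 < s ∧ BallLE Q.d a (x, r + s) := by
    intro a ha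
    obtain ⟨u, ⟨s, hs, rfl⟩, hau⟩ := ha E hEdir (x, r) hElub (hrefl _)
    exact ⟨s, hs, hau⟩
  have hub : IsUpperBound (BallLE Q.d) {b | WayBelow (BallLE Q.d) b (x, r)} (x, r) := by
    intro a ha
    obtain ⟨s, hs, hle⟩ := key a ha
    exact htrans _ _ _ hle (hEub _ ⟨s, hs, rfl⟩)
  constructor
  · refine ⟨⟨(x, r + 1), h 1 one_pos⟩, ?_⟩
    intro a ha b hb
    obtain ⟨s, hs, has⟩ := key a ha
    obtain ⟨t, ht, hbt⟩ := key b hb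
    refine ⟨(x, r + min s t), h _ (lt_min hs ht), ?_, ?_⟩
    · refine htrans _ _ _ has ?_
      show (Q.d x x : ℝ) ≤ (↑(r + s) : ℝ) - ↑(r + min s t)
      rw [dxx]
      have : (min s t : ℝ) ≤ (s : ℝ) := by exact_mod_cast min_le_left s t
      push_cast; linarith
    · refine htrans _ _ _ hbt ?_
      show (Q.d x x : ℝ) ≤ (↑(r + t) : ℝ) - ↑(r + min s t)
      rw [dxx]
      have : (min s t : ℝ) ≤ (t : ℝ) := by exact_mod_cast min_le_right s t
      push_cast; linarith
  · refine ⟨hub, fun v hv => ?_⟩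
    have hvE : IsUpperBound (BallLE Q.d) E v := by
      rintro a ⟨s, hs, rfl⟩
      exact hv _ (h s hs)
    exact hElub.2 v hvE
end

section
/- A T1 quasi-metric space is Yoneda-complete if and only if it is sequentially Yoneda-complete. -/
open scoped NNReal ENNReal

attribute [local instance] Classical.propDecidable

universe u

/-- Yoneda completeness: every left K-Cauchy net indexed by a (nonempty, directed,
preordered) index set has a Yoneda-limit. -/
def YonedaComplete {X : Type u} (Q : QuasiMetric X) : Prop :=
  ∀ (Λ : Type u) (le : Λ → Λ → Prop), Nonempty Λ → (∀ a, le a a) →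
    (∀ a b c, le a b → le b c → le a c) → (∀ a b, ∃ c, le a c ∧ le b c) →
    ∀ f : Λ → X, LeftKCauchyNet Q.d le f → ∃ x, IsYonedaLimit Q.d le f x

/-- Sequential Yoneda completeness. -/
def SeqYonedaComplete {X : Type u} (Q : QuasiMetric X) : Prop :=
  ∀ f : ℕ → X, LeftKCauchyNet Q.d (· ≤ ·) f → ∃ x, IsYonedaLimit Q.d (· ≤ ·) f x

/-!
Fix a left K-Cauchy net `f` and indices `α n` beyond which `f` is `2⁻ⁿ`-Cauchy, chosen increasing.
Every increasing sequence `β ≥ α` gives a left K-Cauchy sequence `f ∘ β`, hence a Yoneda-limit.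
If `β ≤ β'`, then `d (f (β n)) (f (β' n)) → 0`, so the limit `x` of `f ∘ β` satisfies
`d x ≤ d x'` for the limit `x'` of `f ∘ β'`; in particular `d x x' ≤ d x' x' = 0`, and T1 gives
`x = x'`. Hence the limit `x` of `f ∘ α` is also the limit of sequences of the net lying beyond
any prescribed index, and this forces `x` to be a Yoneda-limit of the whole net.
-/

open Filter Topology

variable {X : Type*}

theorem isYonedaLimit_nat_iff {d : X → X → ℝ≥0} {u : ℕ → X} {x : X} :
    IsYonedaLimit d (· ≤ ·) u x ↔
      ∀ y, (d x y : ℝ≥0∞) = limsup (fun n => (d (u n) y : ℝ≥0∞)) atTop := by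
  simp only [IsYonedaLimit, limsup_eq_iInf_iSup_of_nat, ge_iff_le]

theorem exists_monotone_ge {Λ : Type*} [Preorder Λ] [IsDirectedOrder Λ] (lo : ℕ → Λ) :
    ∃ β : ℕ → Λ, Monotone β ∧ lo ≤ β := by
  choose up le_up_left le_up_right using fun a b : Λ => exists_ge_ge a b
  refine ⟨fun n => Nat.rec (lo 0) (fun n b => up b (lo (n + 1))) n,
    monotone_nat_of_le_succ fun n => le_up_left _ _, fun n => ?_⟩
  cases n with
  | zero => exact le_rfl
  | succ n => exact le_up_right _ _

namespace QuasiMetric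

variable (Q : QuasiMetric X)

theorem d_self (x : X) : Q.d x x = 0 := ((Q.eq_iff x x).2 rfl).1

theorem coe_d_le_add (x y z : X) : (Q.d x z : ℝ≥0∞) ≤ Q.d x y + Q.d y z := by
  exact_mod_cast Q.triangle x z y

theorem d_le_of_isYonedaLimit_of_tendsto {u v : ℕ → X} {x x' : X}
    (hx : IsYonedaLimit Q.d (· ≤ ·) u x) (hx' : IsYonedaLimit Q.d (· ≤ ·) v x')
    (huv : Tendsto (fun n => (Q.d (u n) (v n) : ℝ≥0∞)) atTop (𝓝 0)) (w : X) :
    Q.d x w ≤ Q.d x' w := by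
  rw [← ENNReal.coe_le_coe, isYonedaLimit_nat_iff.1 hx, isYonedaLimit_nat_iff.1 hx']
  calc limsup (fun n => (Q.d (u n) w : ℝ≥0∞)) atTop
      ≤ limsup ((fun n => (Q.d (u n) (v n) : ℝ≥0∞)) + fun n => (Q.d (v n) w : ℝ≥0∞)) atTop :=
        limsup_le_limsup (.of_forall fun n => Q.coe_d_le_add _ (v n) _)
    _ = limsup (fun n => (Q.d (v n) w : ℝ≥0∞)) atTop :=
        ENNReal.limsup_add_of_left_tendsto_zero huv _

theorem eq_of_isYonedaLimit_of_tendsto (hT1 : ∀ x y, Q.d x y = 0 → x = y) {u v : ℕ → X}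
    {x x' : X} (hx : IsYonedaLimit Q.d (· ≤ ·) u x) (hx' : IsYonedaLimit Q.d (· ≤ ·) v x')
    (huv : Tendsto (fun n => (Q.d (u n) (v n) : ℝ≥0∞)) atTop (𝓝 0)) : x = x' :=
  hT1 x x' <| le_antisymm
    ((Q.d_le_of_isYonedaLimit_of_tendsto hx hx' huv x').trans_eq (Q.d_self x')) zero_le

end QuasiMetric

section Nets

variable {Λ : Type*} [Preorder Λ] {d : X → X → ℝ≥0} {f : Λ → X} {ε : ℕ → ℝ≥0} {α β : ℕ → Λ}

def IsLeftKCauchyModulus (d : X → X → ℝ≥0) (f : Λ → X) (ε : ℕ → ℝ≥0) (α : ℕ → Λ) : Prop :=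
  ∀ n b c, α n ≤ b → b ≤ c → d (f b) (f c) < ε n

theorem LeftKCauchyNet.exists_monotone_modulus [IsDirectedOrder Λ]
    (hf : LeftKCauchyNet d (· ≤ ·) f) (hε : ∀ n, 0 < ε n) :
    ∃ α : ℕ → Λ, Monotone α ∧ IsLeftKCauchyModulus d f ε α := by
  choose a ha using fun n => hf (ε n) (hε n)
  obtain ⟨α, hα, haα⟩ := exists_monotone_ge a
  exact ⟨α, hα, fun n b c hb hc => ha n b c ((haα n).trans hb) hc⟩

namespace IsLeftKCauchyModulus

theorem leftKCauchyNet_comp (hα : IsLeftKCauchyModulus d f ε α)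
    (hε : Tendsto ε atTop (𝓝 0)) (hβ : Monotone β) (hαβ : α ≤ β) :
    LeftKCauchyNet d (· ≤ ·) (f ∘ β) := fun η hη => by
  obtain ⟨n, hn⟩ := (hε.eventually (gt_mem_nhds hη)).exists
  exact ⟨n, fun p q hp hq => (hα n _ _ ((hαβ n).trans (hβ hp)) (hβ hq)).trans hn⟩

theorem tendsto_d_comp (hα : IsLeftKCauchyModulus d f ε α) (hε : Tendsto ε atTop (𝓝 0))
    {β' : ℕ → Λ} (hαβ : α ≤ β) (hββ' : β ≤ β') :
    Tendsto (fun n => (d (f (β n)) (f (β' n)) : ℝ≥0∞)) atTop (𝓝 0) :=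
  tendsto_of_tendsto_of_tendsto_of_le_of_le tendsto_const_nhds
    (by simpa using ENNReal.tendsto_coe.2 hε) (fun _ => zero_le)
    (fun n => ENNReal.coe_le_coe.2 (hα n _ _ (hαβ n) (hββ' n)).le)

end IsLeftKCauchyModulus

namespace QuasiMetric

variable (Q : QuasiMetric X)

theorem iInf_iSup_le_of_frequently_near (hf : LeftKCauchyNet Q.d (· ≤ ·) f) {x : X}
    (hx : ∀ γ, ∀ ε : ℝ≥0, 0 < ε → ∃ δ, γ ≤ δ ∧ Q.d (f δ) x < ε) (w : X) :
    ⨅ a, ⨆ b, ⨆ _ : a ≤ b, (Q.d (f b) w : ℝ≥0∞) ≤ Q.d x w := by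
  refine ENNReal.le_of_forall_pos_le_add fun ε hε _ => ?_
  obtain ⟨a, ha⟩ := hf (ε / 2) (half_pos hε)
  refine iInf_le_of_le a (iSup₂_le fun b hab => ?_)
  obtain ⟨δ, hbδ, hδx⟩ := hx b (ε / 2) (half_pos hε)
  calc (Q.d (f b) w : ℝ≥0∞)
      ≤ Q.d (f b) (f δ) + (Q.d (f δ) x + Q.d x w) :=
        (Q.coe_d_le_add _ (f δ) _).trans (by gcongr; exact Q.coe_d_le_add _ _ _)
    _ ≤ ↑(ε / 2) + (↑(ε / 2) + Q.d x w) := by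
        gcongr
        exact_mod_cast (ha b δ hab hbδ).le
    _ = Q.d x w + ε := by rw [← add_assoc, ← ENNReal.coe_add, add_halves, add_comm]

theorem isYonedaLimit_of_forall_exists_seq (hf : LeftKCauchyNet Q.d (· ≤ ·) f) {x : X}
    (hx : ∀ γ, ∃ β : ℕ → Λ, (∀ n, γ ≤ β n) ∧ IsYonedaLimit Q.d (· ≤ ·) (f ∘ β) x) :
    IsYonedaLimit Q.d (· ≤ ·) f x := by
  refine fun w => le_antisymm (le_iInf fun γ => ?_)
    (Q.iInf_iSup_le_of_frequently_near hf (fun γ ε hε => ?_) w)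
  · obtain ⟨β, hγβ, hβx⟩ := hx γ
    rw [isYonedaLimit_nat_iff.1 hβx w]
    exact limsup_le_iSup.trans (iSup_le fun n => le_iSup₂_of_le (β n) (hγβ n) le_rfl)
  · obtain ⟨β, hγβ, hβx⟩ := hx γ
    have hlim : limsup (fun n => (Q.d ((f ∘ β) n) x : ℝ≥0∞)) atTop < ε := by
      rw [← isYonedaLimit_nat_iff.1 hβx x, Q.d_self]
      exact_mod_cast hε
    obtain ⟨n, hn⟩ := (eventually_lt_of_limsup_lt hlim).exists
    exact ⟨β n, hγβ n, by exact_mod_cast hn⟩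

end QuasiMetric

end Nets

theorem SeqYonedaComplete.exists_isYonedaLimit {Q : QuasiMetric X}
    (hT1 : ∀ x y, Q.d x y = 0 → x = y) (h : SeqYonedaComplete Q) {Λ : Type*} [Preorder Λ]
    [IsDirectedOrder Λ] {f : Λ → X} (hf : LeftKCauchyNet Q.d (· ≤ ·) f) :
    ∃ x, IsYonedaLimit Q.d (· ≤ ·) f x := by
  have hε : Tendsto (fun n => (2⁻¹ : ℝ≥0) ^ n) atTop (𝓝 0) :=
    tendsto_pow_atTop_nhds_zero_of_lt_one zero_le (by norm_num)
  obtain ⟨α, hα_mono, hα⟩ :=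
    hf.exists_monotone_modulus (ε := fun n => (2⁻¹ : ℝ≥0) ^ n) fun n => by positivity
  obtain ⟨x, hx⟩ := h _ (hα.leftKCauchyNet_comp hε hα_mono le_rfl)
  refine ⟨x, Q.isYonedaLimit_of_forall_exists_seq hf fun γ => ?_⟩
  choose c hαc hγc using fun n => exists_ge_ge (α n) γ
  obtain ⟨β, hβ_mono, hcβ⟩ := exists_monotone_ge c
  have hαβ : α ≤ β := fun n => (hαc n).trans (hcβ n)
  obtain ⟨x', hx'⟩ := h _ (hα.leftKCauchyNet_comp hε hβ_mono hαβ)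
  obtain rfl := Q.eq_of_isYonedaLimit_of_tendsto hT1 hx hx' (hα.tendsto_d_comp hε le_rfl hαβ)
  exact ⟨β, fun n => (hγc n).trans (hcβ n), hx'⟩

theorem YonedaComplete.seqYonedaComplete {X : Type u} {Q : QuasiMetric X}
    (h : YonedaComplete Q) : SeqYonedaComplete Q := fun f hf => by
  obtain ⟨x, hx⟩ := h (ULift.{u} ℕ) (fun a b => a.down ≤ b.down) ⟨⟨0⟩⟩
    (fun _ => le_rfl) (fun _ _ _ => le_trans)
    (fun a b => ⟨⟨max a.down b.down⟩, le_max_left _ _, le_max_right _ _⟩)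
    (f ∘ ULift.down) fun ε hε =>
      let ⟨a, ha⟩ := hf ε hε
      ⟨⟨a⟩, fun b c => ha b.down c.down⟩
  exact ⟨x, fun y => by simpa using hx y⟩

theorem stmt6 {X : Type u} (Q : QuasiMetric X) (hT1 : ∀ x y, Q.d x y = 0 → x = y) :
    YonedaComplete Q ↔ SeqYonedaComplete Q := by
  refine ⟨YonedaComplete.seqYonedaComplete, fun h Λ le _ hrefl htrans hdir f hf => ?_⟩
  let _ : Preorder Λ := { le := le, le_refl := hrefl, le_trans := htrans }
  have : IsDirectedOrder Λ := ⟨hdir⟩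
  exact h.exists_isYonedaLimit hT1 hf
end

section
/- The quasi-metric space (Σ^∞, q_b) is sequentially Yoneda-complete: every left K-Cauchy sequence in (Σ^∞, q_b) has a Yoneda-limit. -/
open scoped NNReal ENNReal

attribute [local instance] Classical.propDecidable

universe u

/-- Finite and infinite words over `α`: partial functions on `ℕ` with downward-closed domain. -/
def Word (α : Type u) : Type u := {f : ℕ → Option α // ∀ n, f n = none → f (n + 1) = none}

def emptyWord (α : Type u) : Word α := ⟨fun _ => none, fun _ _ => rfl⟩

/-- The prefix order on words. -/
def wpre {α : Type u} (x y : Word α) : Prop := ∀ n a, x.1 n = some a → y.1 n = some a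

/-- The length of a word, in `ℕ∞`. -/
noncomputable def wlen {α : Type u} (x : Word α) : ℕ∞ := ⨅ n ∈ {n : ℕ | x.1 n = none}, (n : ℕ∞)

/-- `pw n = 2^{-n}`, with `2^{-∞} = 0`. -/
noncomputable def pw (n : ℕ∞) : ℝ≥0 := if n = ⊤ then 0 else (2 : ℝ≥0)⁻¹ ^ n.toNat

/-- The balanced quasi-metric on words. -/
noncomputable def qb {α : Type u} (x y : Word α) : ℝ≥0 :=
  if wpre x y then pw (wlen x) - pw (wlen y) else 1

/-!
Since `qb x y < 1` forces `x` to be a prefix of `y`, a left K-Cauchy sequence is, from some index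
on, a chain in the prefix order. Such a chain has a least upper bound: the word carrying at each
position the letter that the chain eventually carries there; its length is the supremum of the
lengths. For every `y`, `qb (f n) y` then actually converges to `qb x y`: it is eventually `1` when
`x` is not a prefix of `y`, and otherwise equals `2^{-ℓ(f n)} - 2^{-ℓ(y)}`, which converges by
continuity of `n ↦ 2^{-n}` on `ℕ∞`. Convergence makes the limsup in the Yoneda condition a limit.
-/

open Filter Topology

lemma isYonedaLimit_of_tendsto {X : Type*} {d : X → X → ℝ≥0} {f : ℕ → X} {x : X}
    (h : ∀ y, Tendsto (fun n => d (f n) y) atTop (𝓝 (d x y))) :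
    IsYonedaLimit d (· ≤ ·) f x := fun y =>
  (ENNReal.tendsto_coe.2 (h y)).limsup_eq.symm.trans limsup_eq_iInf_iSup_of_nat

section Words

variable {α : Type u}

lemma Word.eq_none_of_le (x : Word α) {m n : ℕ} (hmn : m ≤ n) (hm : x.1 m = none) :
    x.1 n = none := by
  induction n, hmn using Nat.le_induction with
  | base => exact hm
  | succ n _ ih => exact x.2 n ih

lemma wlen_le_iff (x : Word α) (n : ℕ) : wlen x ≤ n ↔ x.1 n = none := by
  refine ⟨fun hle => ?_, fun hn => iInf₂_le n hn⟩
  by_contra hn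
  have hlt : (n : ℕ∞) < wlen x := by
    refine (ENat.add_one_le_iff (ENat.natCast_ne_top n)).1
      (le_iInf₂ fun m (hm : x.1 m = none) => ?_)
    have : n < m := by
      by_contra! hmn
      exact hn (x.eq_none_of_le hmn hm)
    exact_mod_cast this
  exact hlt.not_ge hle

lemma lt_wlen_iff (x : Word α) (n : ℕ) : n < wlen x ↔ x.1 n ≠ none := by
  rw [← not_le, wlen_le_iff]

lemma wpre_trans {x y z : Word α} (hxy : wpre x y) (hyz : wpre y z) : wpre x z :=
  fun n a ha => hyz n a (hxy n a ha)

lemma wlen_le_of_wpre {x y : Word α} (h : wpre x y) : wlen x ≤ wlen y := by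
  refine le_iInf₂ fun n (hn : y.1 n = none) => (wlen_le_iff x n).2 ?_
  cases hx : x.1 n with
  | none => rfl
  | some a => simpa [hn] using h n a hx

end Words

lemma pw_antitone : Antitone pw := by
  intro m n hmn
  rcases eq_or_ne n ⊤ with rfl | hn
  · simp [pw]
  · have hm : m ≠ ⊤ := ne_top_of_le_ne_top hn hmn
    simp only [pw, if_neg hn, if_neg hm]
    exact pow_le_pow_of_le_one zero_le (by norm_num) (ENat.toNat_le_toNat hmn hn)

lemma continuous_pw : Continuous pw := by
  refine continuous_iff_continuousAt.2 fun n => ?_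
  rcases eq_or_ne n ⊤ with rfl | hn
  · have hpow := NNReal.tendsto_pow_atTop_nhds_zero_of_lt_one (r := 2⁻¹) (by norm_num)
    rw [ContinuousAt, show pw ⊤ = 0 from if_pos rfl]
    refine tendsto_order.2 ⟨fun a ha => (zero_le.not_gt ha).elim, fun ε hε => ?_⟩
    obtain ⟨m, hm⟩ := (hpow.eventually (gt_mem_nhds hε)).exists
    filter_upwards [Ioi_mem_nhds (ENat.natCast_lt_top m)] with k hk
    calc pw k ≤ pw m := pw_antitone (le_of_lt hk)
      _ < ε := by simpa [pw] using hm
  · rw [ContinuousAt, ENat.nhds_eq_pure hn]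
    exact tendsto_pure_nhds pw n

section Qb

variable {α : Type u}

lemma qb_of_wpre {x y : Word α} (h : wpre x y) : qb x y = pw (wlen x) - pw (wlen y) := if_pos h

lemma qb_of_not_wpre {x y : Word α} (h : ¬ wpre x y) : qb x y = 1 := if_neg h

lemma wpre_of_qb_lt_one {x y : Word α} (h : qb x y < 1) : wpre x y := by
  by_contra hxy
  exact h.ne (qb_of_not_wpre hxy)

end Qb

section ChainLimit

variable {α : Type u} {g : ℕ → Word α}

noncomputable def chainLimit (g : ℕ → Word α) : Word α :=
  ⟨fun n => if h : ∃ a b, (g b).1 n = some a then some h.choose else none, fun n hn => by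
    simp only [dite_eq_right_iff, reduceCtorEq, imp_false, not_exists] at hn ⊢
    intro a b hb
    rw [(g b).2 n (Option.eq_none_iff_forall_ne_some.2 (hn · b))] at hb
    simp at hb⟩

lemma chainLimit_eq_some_iff (hg : ∀ m n, m ≤ n → wpre (g m) (g n)) {n : ℕ} {a : α} :
    (chainLimit g).1 n = some a ↔ ∃ b, (g b).1 n = some a := by
  have huniq : ∀ {a a' b b'}, (g b).1 n = some a → (g b').1 n = some a' → a = a' := by
    intro a a' b b' h h'
    rcases le_total b b' with hbb | hbb
    · simpa [hg b b' hbb n a h] using h'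
    · simpa [hg b' b hbb n a' h'] using h.symm
  constructor
  · intro h
    simp only [chainLimit] at h
    split_ifs at h with hex
    exact ⟨hex.choose_spec.choose, h ▸ hex.choose_spec.choose_spec⟩
  · rintro ⟨b, hb⟩
    have hex : ∃ a b, (g b).1 n = some a := ⟨a, b, hb⟩
    simp only [chainLimit, dif_pos hex]
    exact congrArg some (huniq hex.choose_spec.choose_spec hb)

lemma wpre_chainLimit (hg : ∀ m n, m ≤ n → wpre (g m) (g n)) (b : ℕ) :
    wpre (g b) (chainLimit g) :=
  fun _ _ h => (chainLimit_eq_some_iff hg).2 ⟨b, h⟩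

lemma eventually_eq_some_of_chainLimit (hg : ∀ m n, m ≤ n → wpre (g m) (g n)) {n : ℕ} {a : α}
    (h : (chainLimit g).1 n = some a) : ∀ᶠ b in atTop, (g b).1 n = some a := by
  obtain ⟨b, hb⟩ := (chainLimit_eq_some_iff hg).1 h
  exact eventually_atTop.2 ⟨b, fun c hc => hg b c hc n a hb⟩

lemma wlen_chainLimit (hg : ∀ m n, m ≤ n → wpre (g m) (g n)) :
    wlen (chainLimit g) = ⨆ b, wlen (g b) := by
  refine le_antisymm ?_ (iSup_le fun b => wlen_le_of_wpre (wpre_chainLimit hg b))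
  induction h : ⨆ b, wlen (g b) using ENat.recTopCoe with
  | top => exact le_top
  | coe k =>
    rw [wlen_le_iff]
    by_contra hk
    obtain ⟨a, ha⟩ := Option.ne_none_iff_exists'.1 hk
    obtain ⟨b, hb⟩ := (chainLimit_eq_some_iff hg).1 ha
    have hkb : (k : ℕ∞) < wlen (g b) := (lt_wlen_iff _ _).2 (by simp [hb])
    exact hkb.not_ge (h ▸ le_iSup (fun b => wlen (g b)) b)

lemma tendsto_wlen_chainLimit (hg : ∀ m n, m ≤ n → wpre (g m) (g n)) :
    Tendsto (fun b => wlen (g b)) atTop (𝓝 (wlen (chainLimit g))) := by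
  rw [wlen_chainLimit hg]
  exact tendsto_atTop_iSup fun m n h => wlen_le_of_wpre (hg m n h)

lemma tendsto_qb_chainLimit (hg : ∀ m n, m ≤ n → wpre (g m) (g n)) (y : Word α) :
    Tendsto (fun b => qb (g b) y) atTop (𝓝 (qb (chainLimit g) y)) := by
  by_cases hxy : wpre (chainLimit g) y
  · have hpre : ∀ b, wpre (g b) y := fun b => wpre_trans (wpre_chainLimit hg b) hxy
    simp only [qb_of_wpre hxy, qb_of_wpre (hpre _)]
    exact ((continuous_pw.tendsto _).comp (tendsto_wlen_chainLimit hg)).sub_const _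
  · obtain ⟨n, a, hxa, hya⟩ : ∃ n a, (chainLimit g).1 n = some a ∧ y.1 n ≠ some a := by
      simpa [wpre] using hxy
    rw [qb_of_not_wpre hxy]
    refine tendsto_const_nhds.congr' ?_
    filter_upwards [eventually_eq_some_of_chainLimit hg hxa] with b hb
    exact (qb_of_not_wpre fun h => hya (h n a hb)).symm

end ChainLimit

theorem stmt7 {α : Type u} (f : ℕ → Word α) (h : LeftKCauchyNet qb (· ≤ ·) f) :
    ∃ x : Word α, IsYonedaLimit qb (· ≤ ·) f x := by
  obtain ⟨N, hN⟩ := h 1 one_pos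
  have hchain : ∀ m n, m ≤ n → wpre (f (m + N)) (f (n + N)) := fun m n hmn =>
    wpre_of_qb_lt_one (hN _ _ (Nat.le_add_left N m) (by omega))
  refine ⟨chainLimit fun n => f (n + N), isYonedaLimit_of_tendsto fun y => ?_⟩
  exact (tendsto_add_atTop_iff_nat N).1 (tendsto_qb_chainLimit hchain y)
end

section
/- Let (X,d) be a quasi-metric space. If D is a directed subset of the poset (BX, ⊑_d) of formal balls, then the net (y)_{(y,r)∈D}, indexed by D with its order, is a left K-Cauchy net in (X,d). -/
open scoped NNReal ENNReal

attribute [local instance] Classical.propDecidable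

universe u

theorem stmt9 {X : Type u} (Q : QuasiMetric X) (D : Set (X × ℝ≥0))
    (hD : DirectedSubset (BallLE Q.d) D) :
    LeftKCauchyNet Q.d (fun a b : D => BallLE Q.d a b) (fun b : D => (b : X × ℝ≥0).1) := by
  intro ε hε
  set S : Set ℝ := (fun b : X × ℝ≥0 => (b.2 : ℝ)) '' D with hS
  have hSne : S.Nonempty := hD.1.image _
  have hbdd : BddBelow S := ⟨0, by rintro r ⟨b, _, rfl⟩; exact b.2.coe_nonneg⟩
  obtain ⟨r, hrS, hrlt⟩ := Real.lt_sInf_add_pos hSne (ε := ε) hε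
  obtain ⟨b₀, hb₀D, hb₀r⟩ := hrS
  refine ⟨⟨b₀, hb₀D⟩, ?_⟩
  rintro ⟨b, hbD⟩ ⟨c, hcD⟩ hab hbc
  simp only [BallLE] at hab hbc ⊢
  have h1 : (Q.d b.1 c.1 : ℝ) ≤ (b.2 : ℝ) - (c.2 : ℝ) := hbc
  have h2 : (b.2 : ℝ) ≤ (b₀.2 : ℝ) := by
    have := (Q.d b₀.1 b.1).coe_nonneg
    linarith [hab]
  have h3 : sInf S ≤ (c.2 : ℝ) := csInf_le hbdd ⟨c, hcD, rfl⟩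
  have : (Q.d b.1 c.1 : ℝ) < (ε : ℝ) := by
    have hb₀ : (b₀.2 : ℝ) < sInf S + ε := by simpa [← hb₀r] using hrlt
    linarith
  exact_mod_cast this
end

section
/- Let (X,d) be a quasi-metric space such that (BX, ⊑_d) is a dcpo, and let D be a directed subset of BX with least upper bound (z,s). Then s = inf{r : (y,r) ∈ D} and z is the Yoneda-limit of the net (y)_{(y,r)∈D}. -/
open scoped NNReal ENNReal

attribute [local instance] Classical.propDecidable

universe u

section Aux

variable {X : Type u} (Q : QuasiMetric X)

lemma myd_self (x : X) : Q.d x x = 0 := ((Q.eq_iff x x).mpr rfl).1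

lemma myball_refl (b : X × ℝ≥0) : BallLE Q.d b b := by
  simp [BallLE, myd_self]

lemma myball_trans {a b c : X × ℝ≥0} (h1 : BallLE Q.d a b) (h2 : BallLE Q.d b c) :
    BallLE Q.d a c := by
  have ht := Q.triangle a.1 c.1 b.1
  have ht' : (Q.d a.1 c.1 : ℝ) ≤ (Q.d a.1 b.1 : ℝ) + (Q.d b.1 c.1 : ℝ) := by
    exact_mod_cast ht
  unfold BallLE at *
  linarith

lemma myball_antisymm {a b : X × ℝ≥0} (h1 : BallLE Q.d a b) (h2 : BallLE Q.d b a) :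
    a = b := by
  have n1 : (0:ℝ) ≤ Q.d a.1 b.1 := (Q.d a.1 b.1).coe_nonneg
  have n2 : (0:ℝ) ≤ Q.d b.1 a.1 := (Q.d b.1 a.1).coe_nonneg
  unfold BallLE at h1 h2
  have hr : (a.2 : ℝ) = b.2 := by linarith
  have hd1 : Q.d a.1 b.1 = 0 := by
    have : (Q.d a.1 b.1 : ℝ) = 0 := by linarith
    exact_mod_cast this
  have hd2 : Q.d b.1 a.1 = 0 := by
    have : (Q.d b.1 a.1 : ℝ) = 0 := by linarith
    exact_mod_cast this
  have hx : a.1 = b.1 := (Q.eq_iff a.1 b.1).mp ⟨hd1, hd2⟩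
  have hr' : a.2 = b.2 := by exact_mod_cast hr
  exact Prod.ext hx hr'

/-- The key shift lemma: if `(w,q)` is a lub of `E` then `(w, q+a)` is a lub of `E + a`. -/
lemma myshift_lub
    (hdcpo : ∀ D : Set (X × ℝ≥0), DirectedSubset (BallLE Q.d) D →
      ∃ u, IsLub' (BallLE Q.d) D u)
    {E : Set (X × ℝ≥0)} (hE : DirectedSubset (BallLE Q.d) E)
    {w : X} {q : ℝ≥0} (h : IsLub' (BallLE Q.d) E (w, q)) (a : ℝ≥0) :
    IsLub' (BallLE Q.d) ((fun b : X × ℝ≥0 => (b.1, b.2 + a)) '' E) (w, q + a) := by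
  set F := (fun b : X × ℝ≥0 => (b.1, b.2 + a)) '' E with hF
  have hord : ∀ b c : X × ℝ≥0, BallLE Q.d b c →
      BallLE Q.d (b.1, b.2 + a) (c.1, c.2 + a) := by
    intro b c hbc
    unfold BallLE at *
    dsimp only
    push_cast
    linarith
  have hFdir : DirectedSubset (BallLE Q.d) F := by
    constructor
    · obtain ⟨b, hb⟩ := hE.1
      exact ⟨_, ⟨b, hb, rfl⟩⟩
    · rintro _ ⟨b, hb, rfl⟩ _ ⟨c, hc, rfl⟩
      obtain ⟨e, he, hbe, hce⟩ := hE.2 b hb c hc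
      exact ⟨(e.1, e.2 + a), ⟨e, he, rfl⟩, hord _ _ hbe, hord _ _ hce⟩
  obtain ⟨⟨w', q'⟩, hlub'⟩ := hdcpo F hFdir
  -- (w, q+a) is an upper bound of F
  have hub : IsUpperBound (BallLE Q.d) F (w, q + a) := by
    rintro _ ⟨b, hb, rfl⟩
    exact hord _ _ (h.1 b hb)
  have h1 : BallLE Q.d (w', q') (w, q + a) := hlub'.2 _ hub
  have h1' : (Q.d w' w : ℝ) ≤ (q' : ℝ) - ((q:ℝ) + a) := by
    unfold BallLE at h1; push_cast at h1; exact h1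
  have haq : (a : ℝ) ≤ (q' : ℝ) := by
    have := (Q.d w' w).coe_nonneg
    have hq := q.coe_nonneg
    linarith
  have haq' : a ≤ q' := by exact_mod_cast haq
  -- (w', q' - a) is an upper bound of E
  have hub2 : IsUpperBound (BallLE Q.d) E (w', q' - a) := by
    intro b hb
    have := hlub'.1 (b.1, b.2 + a) ⟨b, hb, rfl⟩
    unfold BallLE at this ⊢
    dsimp at this ⊢
    rw [NNReal.coe_sub haq']
    push_cast at this
    linarith
  have h2 : BallLE Q.d (w, q) (w', q' - a) := h.2 _ hub2
  have h2' : (Q.d w w' : ℝ) ≤ (q : ℝ) - ((q' : ℝ) - a) := by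
    unfold BallLE at h2
    dsimp at h2
    rw [NNReal.coe_sub haq'] at h2
    exact h2
  have n1 : (0:ℝ) ≤ Q.d w' w := (Q.d w' w).coe_nonneg
  have n2 : (0:ℝ) ≤ Q.d w w' := (Q.d w w').coe_nonneg
  have hq' : (q' : ℝ) = (q : ℝ) + a := by linarith
  have hd1 : Q.d w' w = 0 := by
    have : (Q.d w' w : ℝ) = 0 := by linarith
    exact_mod_cast this
  have hd2 : Q.d w w' = 0 := by
    have : (Q.d w w' : ℝ) = 0 := by linarith
    exact_mod_cast this
  have hw : w' = w := (Q.eq_iff w' w).mp ⟨hd1, hd2⟩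
  have hqq : q' = q + a := by exact_mod_cast hq'
  rw [← hw, ← hqq]
  exact hlub'


/-- A cofinal restriction has the same lubs. -/
lemma mylub_cofinal {D : Set (X × ℝ≥0)} (hD : DirectedSubset (BallLE Q.d) D)
    {a : X × ℝ≥0} (ha : a ∈ D) {u : X × ℝ≥0} (h : IsLub' (BallLE Q.d) D u) :
    IsLub' (BallLE Q.d) {b ∈ D | BallLE Q.d a b} u := by
  constructor
  · intro b hb; exact h.1 b hb.1
  · intro v hv
    refine h.2 v ?_
    intro c hc
    obtain ⟨e, he, hce, hae⟩ := hD.2 c hc a ha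
    exact myball_trans Q hce (hv e ⟨he, hae⟩)

lemma mydir_cofinal {D : Set (X × ℝ≥0)} (hD : DirectedSubset (BallLE Q.d) D)
    {a : X × ℝ≥0} (ha : a ∈ D) :
    DirectedSubset (BallLE Q.d) {b ∈ D | BallLE Q.d a b} := by
  constructor
  · exact ⟨a, ha, myball_refl Q a⟩
  · rintro b ⟨hb, hab⟩ c ⟨hc, hac⟩
    obtain ⟨e, he, hbe, hce⟩ := hD.2 b hb c hc
    exact ⟨e, ⟨he, myball_trans Q hab hbe⟩, hbe, hce⟩

end Aux

theorem stmt10 {X : Type u} (Q : QuasiMetric X)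
    (hdcpo : ∀ D : Set (X × ℝ≥0), DirectedSubset (BallLE Q.d) D →
      ∃ u, IsLub' (BallLE Q.d) D u)
    (D : Set (X × ℝ≥0)) (hD : DirectedSubset (BallLE Q.d) D)
    (z : X) (s : ℝ≥0) (hlub : IsLub' (BallLE Q.d) D (z, s)) :
    s = sInf {r : ℝ≥0 | ∃ y, (y, r) ∈ D} ∧
    IsYonedaLimit Q.d (fun a b : D => BallLE Q.d a b) (fun b : D => (b : X × ℝ≥0).1) z := by
  set R : Set ℝ≥0 := {r : ℝ≥0 | ∃ y, (y, r) ∈ D} with hR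
  set t : ℝ≥0 := sInf R with ht
  have hRne : R.Nonempty := by
    obtain ⟨b, hb⟩ := hD.1
    exact ⟨b.2, b.1, hb⟩
  have htle : ∀ b ∈ D, t ≤ b.2 := by
    intro b hb
    exact csInf_le (OrderBot.bddBelow R) ⟨b.1, hb⟩
  -- each radius is ≥ s
  have hsle : ∀ b ∈ D, s ≤ b.2 := by
    intro b hb
    have := hlub.1 b hb
    unfold BallLE at this
    have hn : (0:ℝ) ≤ Q.d b.1 z := (Q.d b.1 z).coe_nonneg
    have : (s:ℝ) ≤ (b.2 : ℝ) := by dsimp at this; linarith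
    exact_mod_cast this
  have hst : s ≤ t := le_csInf hRne (by rintro r ⟨y, hy⟩; exact hsle (y, r) hy)
  -- Part 1: t ≤ s via the shifted-down family
  have hts : t ≤ s := by
    set E : Set (X × ℝ≥0) := (fun b : X × ℝ≥0 => (b.1, b.2 - t)) '' D with hE
    have hEdir : DirectedSubset (BallLE Q.d) E := by
      constructor
      · obtain ⟨b, hb⟩ := hD.1; exact ⟨_, b, hb, rfl⟩
      · rintro _ ⟨b, hb, rfl⟩ _ ⟨c, hc, rfl⟩
        obtain ⟨e, he, hbe, hce⟩ := hD.2 b hb c hc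
        refine ⟨(e.1, e.2 - t), ⟨e, he, rfl⟩, ?_, ?_⟩
        · unfold BallLE at hbe ⊢
          dsimp only at *
          rw [NNReal.coe_sub (htle b hb), NNReal.coe_sub (htle e he)]
          linarith
        · unfold BallLE at hce ⊢
          dsimp only at *
          rw [NNReal.coe_sub (htle c hc), NNReal.coe_sub (htle e he)]
          linarith
    obtain ⟨⟨z', s'⟩, hlub'⟩ := hdcpo E hEdir
    have hshift := myshift_lub Q hdcpo hEdir hlub' t
    have hback : (fun b : X × ℝ≥0 => (b.1, b.2 + t)) '' E = D := by
      rw [hE, Set.image_image]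
      have : ∀ b ∈ D, (fun b : X × ℝ≥0 => (b.1, b.2 - t + t)) b = b := by
        intro b hb
        exact Prod.ext rfl (tsub_add_cancel_of_le (htle b hb))
      calc (fun b : X × ℝ≥0 => (b.1, b.2 - t + t)) '' D
          = id '' D := Set.image_congr (by intro b hb; exact this b hb)
        _ = D := Set.image_id D
    rw [hback] at hshift
    have heq : (z, s) = (z', s' + t) :=
      myball_antisymm Q (hlub.2 _ hshift.1) (hshift.2 _ hlub.1)
    have : s = s' + t := congrArg Prod.snd heq
    calc t ≤ s' + t := le_add_self
      _ = s := this.symm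
  have hstq : s = t := le_antisymm hst hts
  refine ⟨hstq, ?_⟩
  -- Part 2: Yoneda limit
  intro y
  have hDne : Nonempty ↥D := Set.Nonempty.to_subtype hD.1
  apply le_antisymm
  · -- d z y ≤ inf sup
    refine le_iInf fun a => ?_
    set S : ℝ≥0∞ := ⨆ b : ↥D, ⨆ _ : BallLE Q.d a b, (Q.d (b : X × ℝ≥0).1 y : ℝ≥0∞) with hS
    by_cases hStop : S = ⊤
    · rw [hStop]; exact le_top
    · set M : ℝ≥0 := S.toNNReal with hM
      have hSM : S = (M : ℝ≥0∞) := (ENNReal.coe_toNNReal hStop).symm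
      have hdM : ∀ b ∈ D, BallLE Q.d a.1 b → Q.d b.1 y ≤ M := by
        intro b hb hab
        have : (Q.d b.1 y : ℝ≥0∞) ≤ S := by
          rw [hS]
          exact le_iSup₂ (f := fun (b : ↥D) (_ : BallLE Q.d a b) => (Q.d (b : X × ℝ≥0).1 y : ℝ≥0∞)) ⟨b, hb⟩ hab
        rw [hSM] at this
        exact_mod_cast this
      set Dge : Set (X × ℝ≥0) := {b ∈ D | BallLE Q.d a.1 b} with hDge
      have hgedir := mydir_cofinal Q hD a.2
      have hgelub := mylub_cofinal Q hD a.2 hlub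
      have hshift := myshift_lub Q hdcpo hgedir hgelub M
      have hub : IsUpperBound (BallLE Q.d)
          ((fun b : X × ℝ≥0 => (b.1, b.2 + M)) '' Dge) (y, s) := by
        rintro _ ⟨b, hb, rfl⟩
        unfold BallLE
        dsimp only
        push_cast
        have h1 : (Q.d b.1 y : ℝ) ≤ M := by exact_mod_cast hdM b hb.1 hb.2
        have h2 : (s : ℝ) ≤ b.2 := by exact_mod_cast hsle b hb.1
        linarith
      have hfin := hshift.2 _ hub
      unfold BallLE at hfin
      dsimp only at hfin
      push_cast at hfin
      rw [hSM]
      have : Q.d z y ≤ M := by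
        have : (Q.d z y : ℝ) ≤ M := by linarith
        exact_mod_cast this
      exact_mod_cast this
  · -- inf sup ≤ d z y
    refine ENNReal.le_of_forall_pos_le_add fun ε hε _ => ?_
    have hlt : s < s + ε := lt_add_of_pos_right s hε
    have : ∃ r ∈ R, r < s + ε := exists_lt_of_csInf_lt hRne (by rw [← ht, ← hstq]; exact hlt)
    obtain ⟨r₀, ⟨x₀, hx₀⟩, hr₀⟩ := this
    have key : (⨆ b : ↥D, ⨆ _ : BallLE Q.d (x₀, r₀) (b : X × ℝ≥0), (Q.d (b : X × ℝ≥0).1 y : ℝ≥0∞))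
        ≤ (Q.d z y : ℝ≥0∞) + ε := by
      refine iSup₂_le fun b hab => ?_
      have hbz := hlub.1 b b.2
      unfold BallLE at hbz hab
      dsimp only at hbz hab
      have htri := Q.triangle (b : X × ℝ≥0).1 y z
      have htri' : (Q.d (b : X × ℝ≥0).1 y : ℝ) ≤ (Q.d (b : X × ℝ≥0).1 z : ℝ) + (Q.d z y : ℝ) := by
        exact_mod_cast htri
      have hrb : ((b : X × ℝ≥0).2 : ℝ) ≤ (r₀ : ℝ) := by
        have hn : (0:ℝ) ≤ Q.d x₀ (b : X × ℝ≥0).1 := NNReal.coe_nonneg _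
        linarith
      have hr₀' : (r₀ : ℝ) < (s : ℝ) + ε := by exact_mod_cast hr₀
      have hfinal : (Q.d (b : X × ℝ≥0).1 y : ℝ) ≤ (Q.d z y : ℝ) + (ε : ℝ) := by
        linarith
      have hfinal' : Q.d (b : X × ℝ≥0).1 y ≤ Q.d z y + ε := by exact_mod_cast hfinal
      calc (Q.d (b : X × ℝ≥0).1 y : ℝ≥0∞) ≤ ((Q.d z y + ε : ℝ≥0) : ℝ≥0∞) := by exact_mod_cast hfinal'
        _ = (Q.d z y : ℝ≥0∞) + ε := by push_cast; ring
    exact le_trans (iInf_le _ (⟨(x₀, r₀), hx₀⟩ : ↥D)) key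
end

section
/- If (X,d) is a Yoneda-complete quasi-metric space, then the poset of formal balls (BX, ⊑_d) is a dcpo. -/
open scoped NNReal ENNReal

attribute [local instance] Classical.propDecidable

universe u

theorem stmt11 {X : Type u} (Q : QuasiMetric X) (h : YonedaComplete Q) :
    ∀ D : Set (X × ℝ≥0), DirectedSubset (BallLE Q.d) D →
      ∃ u, IsLub' (BallLE Q.d) D u := by
  intro D hD
  obtain ⟨hne, hdir⟩ := hD
  haveI hΛne : Nonempty {p : X × ℝ≥0 // p ∈ D} := ⟨⟨hne.choose, hne.choose_spec⟩⟩
  set Λ := {p : X × ℝ≥0 // p ∈ D} with hΛ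
  let le' : Λ → Λ → Prop := fun a b => BallLE Q.d a.1 b.1
  have hdnn : ∀ x y : X, (0 : ℝ) ≤ (Q.d x y : ℝ) := fun x y => (Q.d x y).coe_nonneg
  have hdxx : ∀ x : X, Q.d x x = 0 := fun x => ((Q.eq_iff x x).mpr rfl).1
  have hrefl : ∀ a : Λ, le' a a := by
    intro a
    show (Q.d a.1.1 a.1.1 : ℝ) ≤ _
    rw [hdxx]; simp
  have htrans : ∀ a b c : Λ, le' a b → le' b c → le' a c := by
    intro a b c hab hbc
    have ht := Q.triangle a.1.1 c.1.1 b.1.1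
    have ht' : (Q.d a.1.1 c.1.1 : ℝ) ≤ (Q.d a.1.1 b.1.1 : ℝ) + (Q.d b.1.1 c.1.1 : ℝ) := by
      exact_mod_cast ht
    show (Q.d a.1.1 c.1.1 : ℝ) ≤ (a.1.2 : ℝ) - (c.1.2 : ℝ)
    have h1 : (Q.d a.1.1 b.1.1 : ℝ) ≤ (a.1.2 : ℝ) - (b.1.2 : ℝ) := hab
    have h2 : (Q.d b.1.1 c.1.1 : ℝ) ≤ (b.1.2 : ℝ) - (c.1.2 : ℝ) := hbc
    linarith
  have hdir' : ∀ a b : Λ, ∃ c, le' a c ∧ le' b c := by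
    intro a b
    obtain ⟨c, hc, h1, h2⟩ := hdir a.1 a.2 b.1 b.2
    exact ⟨⟨c, hc⟩, h1, h2⟩
  let f : Λ → X := fun a => a.1.1
  let r₀ : ℝ≥0 := ⨅ a : Λ, a.1.2
  have hr₀le : ∀ a : Λ, r₀ ≤ a.1.2 := fun a => ciInf_le (OrderBot.bddBelow _) a
  have hrad : ∀ a b : Λ, le' a b → (b.1.2 : ℝ) ≤ (a.1.2 : ℝ) := by
    intro a b hab
    have h1 : (Q.d a.1.1 b.1.1 : ℝ) ≤ (a.1.2 : ℝ) - (b.1.2 : ℝ) := hab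
    have := hdnn a.1.1 b.1.1
    linarith
  have hK : LeftKCauchyNet Q.d le' f := by
    intro ε hε
    obtain ⟨a, ha⟩ := exists_lt_of_ciInf_lt (show (⨅ a : Λ, a.1.2) < r₀ + ε from
      lt_add_of_pos_right _ hε)
    refine ⟨a, fun b c hab hbc => ?_⟩
    have h1 : (Q.d (f b) (f c) : ℝ) ≤ (b.1.2 : ℝ) - (c.1.2 : ℝ) := hbc
    have h2 : (b.1.2 : ℝ) ≤ (a.1.2 : ℝ) := hrad a b hab
    have h3 : (r₀ : ℝ) ≤ (c.1.2 : ℝ) := by exact_mod_cast hr₀le c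
    have h4 : (a.1.2 : ℝ) < (r₀ : ℝ) + (ε : ℝ) := by exact_mod_cast ha
    have : (Q.d (f b) (f c) : ℝ) < (ε : ℝ) := by linarith
    exact_mod_cast this
  obtain ⟨x, hx⟩ := h Λ le' hΛne hrefl htrans hdir' f hK
  refine ⟨(x, r₀), ?_, ?_⟩
  · -- upper bound
    intro p hp
    set a : Λ := ⟨p, hp⟩ with ha
    show (Q.d p.1 x : ℝ) ≤ (p.2 : ℝ) - (r₀ : ℝ)
    have key : (Q.d p.1 x : ℝ≥0∞) ≤ (↑(p.2 - r₀) : ℝ≥0∞) +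
        ⨅ c : Λ, ⨆ b : Λ, ⨆ _ : le' c b, (Q.d (f b) x : ℝ≥0∞) := by
      rw [ENNReal.add_iInf]
      refine le_iInf fun c => ?_
      obtain ⟨e, hae, hce⟩ := hdir' a c
      have h1 : (Q.d p.1 (f e) : ℝ≥0∞) ≤ (↑(p.2 - r₀) : ℝ≥0∞) := by
        rw [ENNReal.coe_le_coe, ← NNReal.coe_le_coe, NNReal.coe_sub (hr₀le a)]
        have h1 : (Q.d a.1.1 e.1.1 : ℝ) ≤ (a.1.2 : ℝ) - (e.1.2 : ℝ) := hae
        have h3 : (r₀ : ℝ) ≤ (e.1.2 : ℝ) := by exact_mod_cast hr₀le e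
        exact h1.trans (by simpa [ha] using by linarith)
      have h2 : (Q.d (f e) x : ℝ≥0∞) ≤ ⨆ b : Λ, ⨆ _ : le' c b, (Q.d (f b) x : ℝ≥0∞) :=
        le_iSup₂ (f := fun (b : Λ) (_ : le' c b) => (Q.d (f b) x : ℝ≥0∞)) e hce
      have ht : (Q.d p.1 x : ℝ≥0∞) ≤ (Q.d p.1 (f e) : ℝ≥0∞) + (Q.d (f e) x : ℝ≥0∞) := by
        rw [← ENNReal.coe_add, ENNReal.coe_le_coe]
        exact Q.triangle _ _ _
      exact ht.trans (add_le_add h1 h2)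
    rw [← hx x, hdxx x] at key
    simp only [ENNReal.coe_zero, add_zero] at key
    rw [ENNReal.coe_le_coe, ← NNReal.coe_le_coe, NNReal.coe_sub (hr₀le a)] at key
    exact key
  · -- least
    rintro ⟨y, s⟩ hub
    have hub' : ∀ a : Λ, (Q.d a.1.1 y : ℝ) ≤ (a.1.2 : ℝ) - (s : ℝ) := fun a => hub a.1 a.2
    have hs : ∀ a : Λ, s ≤ a.1.2 := by
      intro a
      have := hub' a
      have := hdnn a.1.1 y
      rw [← NNReal.coe_le_coe]
      linarith
    have hsr : s ≤ r₀ := le_ciInf hs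
    show (Q.d x y : ℝ) ≤ (r₀ : ℝ) - (s : ℝ)
    by_contra hcon
    push_neg at hcon
    set δ : ℝ := (Q.d x y : ℝ) - ((r₀ : ℝ) - (s : ℝ)) with hδ
    have hδpos : 0 < δ := by simp [hδ]; linarith
    set ε : ℝ≥0 := (δ/2).toNNReal with hε
    have hεpos : 0 < ε := Real.toNNReal_pos.mpr (by linarith)
    obtain ⟨a, ha⟩ := exists_lt_of_ciInf_lt (show (⨅ a : Λ, a.1.2) < r₀ + ε from
      lt_add_of_pos_right _ hεpos)
    have hsup : (⨆ b : Λ, ⨆ _ : le' a b, (Q.d (f b) y : ℝ≥0∞)) ≤ (↑(r₀ - s + ε) : ℝ≥0∞) := by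
      refine iSup₂_le fun b hab => ?_
      rw [ENNReal.coe_le_coe, ← NNReal.coe_le_coe]
      have h1 := hub' b
      have h2 := hrad a b hab
      have h4 : (a.1.2 : ℝ) < (r₀ : ℝ) + (ε : ℝ) := by exact_mod_cast ha
      rw [NNReal.coe_add, NNReal.coe_sub hsr]
      linarith
    have hle : (Q.d x y : ℝ≥0∞) ≤ (↑(r₀ - s + ε) : ℝ≥0∞) := by
      rw [hx y]
      exact (iInf_le _ a).trans hsup
    rw [ENNReal.coe_le_coe, ← NNReal.coe_le_coe, NNReal.coe_add, NNReal.coe_sub hsr] at hle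
    have hεδ : (ε : ℝ) = δ/2 := Real.coe_toNNReal _ (by linarith)
    rw [hεδ] at hle
    simp only [hδ] at hle
    linarith
end

section
/- Let x ∈ Σ^∞ with ℓ(x) = ∞, r ∈ ℝ≥0, and let x_n be the prefix of x of length n. Then ((x_n, 2^{-n} + r))_{n∈ℕ} is an ascending sequence in (BΣ^∞, ⊑_{q_b}) whose least upper bound is (x, r). -/
open scoped NNReal ENNReal

attribute [local instance] Classical.propDecidable

universe u

/-- The prefix of `x` of length `n`. -/
def trunc {α : Type u} (x : Word α) (n : ℕ) : Word α :=
  ⟨fun k => if k + 1 ≤ n then x.1 k else none, by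
    intro k hk
    dsimp only at hk ⊢
    by_cases h : k + 1 + 1 ≤ n
    · have h1 : k + 1 ≤ n := Nat.le_of_succ_le h
      rw [if_pos h1] at hk
      rw [if_pos h]
      exact x.2 k hk
    · rw [if_neg h]⟩

/-! The truncations of an infinite word `x` satisfy `qb (trunc x n) x = 2⁻ⁿ`, which gives the
chain and the upper bound. For an upper bound `(y, s)`: nonnegativity of `qb` and `2⁻ⁿ → 0` give
`s ≤ r`, which settles the case `x ⊑ y` (then `qb x y = 0`). Otherwise `x` and `y` disagree at some
position, hence so do `y` and every long enough truncation of `x`, so `1 ≤ 2⁻ⁿ + r - s` eventually,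
and in the limit `qb x y = 1 ≤ r - s`. -/

lemma pw_natCast (n : ℕ) : pw (n : ℕ∞) = (2 : ℝ≥0)⁻¹ ^ n := by
  simp [pw]

lemma pw_top : pw ⊤ = 0 := by
  simp [pw]

lemma le_of_eventually_le_inv_two_pow_add {a b : ℝ}
    (h : ∀ᶠ n in Filter.atTop, a ≤ (2 : ℝ)⁻¹ ^ n + b) : a ≤ b := by
  have hlim : Filter.Tendsto (fun n : ℕ => (2 : ℝ)⁻¹ ^ n + b) Filter.atTop (nhds b) := by
    simpa using (tendsto_pow_atTop_nhds_zero_of_lt_one (r := (2 : ℝ)⁻¹) (by norm_num)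
      (by norm_num)).add_const b
  exact ge_of_tendsto hlim h

namespace Word

variable {α : Type u}

lemma apply_ne_none_of_wlen_eq_top {x : Word α} (hx : wlen x = ⊤) (n : ℕ) : x.1 n ≠ none := by
  intro h
  have hle : wlen x ≤ (n : ℕ∞) := iInf₂_le n h
  simp [hx] at hle

lemma trunc_apply_of_lt (x : Word α) {n k : ℕ} (hk : k < n) : (trunc x n).1 k = x.1 k :=
  if_pos hk

lemma trunc_apply_of_le (x : Word α) {n k : ℕ} (hk : n ≤ k) : (trunc x n).1 k = none :=
  if_neg (by omega)

lemma wlen_trunc {x : Word α} (hx : wlen x = ⊤) (n : ℕ) : wlen (trunc x n) = n := by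
  refine le_antisymm (iInf₂_le n (trunc_apply_of_le x le_rfl)) (le_iInf₂ fun k hk => ?_)
  by_contra! hkn
  exact apply_ne_none_of_wlen_eq_top hx k <|
    (trunc_apply_of_lt x (by exact_mod_cast hkn)).symm.trans hk

lemma wpre_trunc_of_le (x : Word α) {m n : ℕ} (hmn : m ≤ n) : wpre (trunc x m) (trunc x n) := by
  intro k a hk
  by_cases hkm : k < m
  · rwa [trunc_apply_of_lt x (lt_of_lt_of_le hkm hmn), ← trunc_apply_of_lt x hkm]
  · simp [trunc_apply_of_le x (not_lt.mp hkm)] at hk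

lemma wpre_trunc (x : Word α) (n : ℕ) : wpre (trunc x n) x := by
  intro k a hk
  by_cases hkn : k < n
  · rwa [← trunc_apply_of_lt x hkn]
  · simp [trunc_apply_of_le x (not_lt.mp hkn)] at hk

lemma eventually_not_wpre_trunc {x y : Word α} (h : ¬ wpre x y) :
    ∀ᶠ n in Filter.atTop, ¬ wpre (trunc x n) y := by
  simp only [wpre, not_forall] at h
  obtain ⟨k, a, hxa, hya⟩ := h
  filter_upwards [Filter.eventually_gt_atTop k] with n hkn hpre
  exact hya (hpre k a ((trunc_apply_of_lt x hkn).trans hxa))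

lemma qb_trunc_trunc {x : Word α} (hx : wlen x = ⊤) {m n : ℕ} (hmn : m ≤ n) :
    (qb (trunc x m) (trunc x n) : ℝ) = (2 : ℝ)⁻¹ ^ m - (2 : ℝ)⁻¹ ^ n := by
  have hpow : (2 : ℝ≥0)⁻¹ ^ n ≤ (2 : ℝ≥0)⁻¹ ^ m := pow_le_pow_of_le_one (by positivity)
    (by norm_num) hmn
  rw [qb, if_pos (wpre_trunc_of_le x hmn), wlen_trunc hx, wlen_trunc hx, pw_natCast, pw_natCast,
    NNReal.coe_sub hpow]
  norm_num

lemma qb_trunc {x : Word α} (hx : wlen x = ⊤) (n : ℕ) :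
    (qb (trunc x n) x : ℝ) = (2 : ℝ)⁻¹ ^ n := by
  rw [qb, if_pos (wpre_trunc x n), wlen_trunc hx, hx, pw_natCast, pw_top, tsub_zero]
  norm_num

lemma qb_eq_zero_of_wpre {x y : Word α} (hx : wlen x = ⊤) (h : wpre x y) : qb x y = 0 := by
  rw [qb, if_pos h, hx, pw_top, zero_tsub]

end Word

open Word in
theorem stmt14 {α : Type u} (x : Word α) (hx : wlen x = ⊤) (r : ℝ≥0) :
    (∀ n : ℕ, BallLE (qb (α := α)) (trunc x n, (2 : ℝ≥0)⁻¹ ^ n + r)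
      (trunc x (n + 1), (2 : ℝ≥0)⁻¹ ^ (n + 1) + r)) ∧
    IsLub' (BallLE (qb (α := α)))
      (Set.range fun n : ℕ => (trunc x n, (2 : ℝ≥0)⁻¹ ^ n + r)) (x, r) := by
  refine ⟨fun n => ?_, ?_, ?_⟩
  · simp only [BallLE, qb_trunc_trunc hx (Nat.le_add_right n 1)]
    push_cast
    linarith
  · rintro _ ⟨n, rfl⟩
    simp only [BallLE, qb_trunc hx n]
    push_cast
    linarith
  · rintro ⟨y, s⟩ hub
    have hball (n : ℕ) : (qb (trunc x n) y : ℝ) ≤ (2 : ℝ)⁻¹ ^ n + (r - s) := by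
      have := hub _ ⟨n, rfl⟩
      simp only [BallLE] at this
      push_cast at this
      linarith
    show (qb x y : ℝ) ≤ r - s
    by_cases hpre : wpre x y
    · rw [qb_eq_zero_of_wpre hx hpre, NNReal.coe_zero]
      exact le_of_eventually_le_inv_two_pow_add <|
        .of_forall fun n => (qb _ y).coe_nonneg.trans (hball n)
    · rw [qb, if_neg hpre, NNReal.coe_one]
      refine le_of_eventually_le_inv_two_pow_add ?_
      filter_upwards [eventually_not_wpre_trunc hpre] with n hn
      simpa [qb, hn] using hball n
end

section
/- The function d_w on Σ^∞ defined by d_w(x,y) = 2^{-ℓ(x⊓y)} - 2^{-ℓ(x)} is a quasi-metric on Σ^∞, and d_w(x,y) = 0 if and only if x is a prefix of y. -/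
open scoped NNReal ENNReal

attribute [local instance] Classical.propDecidable

universe u

/-- The longest common prefix of two words. -/
noncomputable def wmeet {α : Type u} (x y : Word α) : Word α :=
  ⟨fun n => if ∀ k ≤ n, x.1 k = y.1 k then x.1 n else none, by
    intro n hn
    dsimp only at hn ⊢
    by_cases h : ∀ k ≤ n + 1, x.1 k = y.1 k
    · have h' : ∀ k ≤ n, x.1 k = y.1 k := fun k hk => h k (le_trans hk (Nat.le_succ n))
      rw [if_pos h'] at hn
      rw [if_pos h]
      exact x.2 n hn
    · rw [if_neg h]⟩

noncomputable def dw {α : Type u} (x y : Word α) : ℝ≥0 :=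
  pw (wlen (wmeet x y)) - pw (wlen x)

/-!
Since `x ⊓ y` is a prefix of `x`, `d_w x y = 0` exactly when `ℓ(x ⊓ y) = ℓ(x)`, i.e. when `x` is a
prefix of `y`; two words that are prefixes of each other coincide. The triangle inequality comes
from the ultrametric inequality `min (ℓ(x ⊓ z), ℓ(z ⊓ y)) ≤ ℓ(x ⊓ y)` together with
`ℓ(x ⊓ z) ≤ ℓ(z)`, which pays for the term `2^{-ℓ(z)}` subtracted in `d_w z y`.
-/

lemma ENat.le_of_forall_natCast_lt {a b : ℕ∞} (h : ∀ n : ℕ, (n : ℕ∞) < a → (n : ℕ∞) < b) :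
    a ≤ b :=
  le_of_forall_lt fun c hc => by
    lift c to ℕ using hc.ne_top
    exact h c hc

lemma pw_strictAnti : StrictAnti pw := by
  intro m n hmn
  have hm : m ≠ ⊤ := hmn.ne_top
  lift m to ℕ using hm
  rcases eq_or_ne n ⊤ with rfl | hn
  · simp only [pw, ENat.natCast_ne_top, ↓reduceIte, ENat.toNat_natCast]
    positivity
  · lift n to ℕ using hn
    simp only [pw, ENat.natCast_ne_top, ↓reduceIte, ENat.toNat_natCast]
    exact pow_lt_pow_right_of_lt_one₀ (by norm_num) (by norm_num) (by exact_mod_cast hmn)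

namespace Word

variable {α : Type u}

lemma eq_none_of_le_s18 (x : Word α) {m n : ℕ} (hmn : m ≤ n) (hm : x.1 m = none) :
    x.1 n = none := by
  induction n, hmn using Nat.le_induction with
  | base => exact hm
  | succ n _ ih => exact x.2 n ih

lemma lt_wlen_iff (x : Word α) (n : ℕ) : (n : ℕ∞) < wlen x ↔ x.1 n ≠ none := by
  constructor
  · intro hn hxn
    exact (iInf₂_le n hxn : wlen x ≤ n).not_gt hn
  · intro hxn
    refine (ENat.add_one_le_iff (ENat.natCast_ne_top n)).1 (le_iInf₂ fun m hm => ?_)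
    have hnm : n < m := lt_of_not_ge fun hmn => hxn (x.eq_none_of_le_s18 hmn hm)
    exact_mod_cast hnm

lemma wmeet_ne_none_iff (x y : Word α) (n : ℕ) :
    (wmeet x y).1 n ≠ none ↔ x.1 n ≠ none ∧ ∀ k ≤ n, x.1 k = y.1 k := by
  simp only [wmeet]
  split_ifs with h
  · exact ⟨fun hn => ⟨hn, h⟩, And.left⟩
  · simp [h]

lemma wlen_wmeet_le_left (x y : Word α) : wlen (wmeet x y) ≤ wlen x :=
  ENat.le_of_forall_natCast_lt fun n hn => by
    rw [lt_wlen_iff, wmeet_ne_none_iff] at hn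
    exact (lt_wlen_iff x n).2 hn.1

lemma wmeet_comm (x y : Word α) : wmeet x y = wmeet y x := by
  refine Subtype.ext (funext fun n => ?_)
  simp only [wmeet]
  by_cases h : ∀ k ≤ n, x.1 k = y.1 k
  · rw [if_pos h, if_pos fun k hk => (h k hk).symm, h n le_rfl]
  · rw [if_neg h, if_neg fun h' => h fun k hk => (h' k hk).symm]

lemma wlen_wmeet_le_right (x y : Word α) : wlen (wmeet x y) ≤ wlen y :=
  wmeet_comm x y ▸ wlen_wmeet_le_left y x

lemma min_wlen_wmeet_le (x y z : Word α) :
    min (wlen (wmeet x z)) (wlen (wmeet z y)) ≤ wlen (wmeet x y) :=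
  ENat.le_of_forall_natCast_lt fun n hn => by
    rw [lt_min_iff, lt_wlen_iff, lt_wlen_iff, wmeet_ne_none_iff, wmeet_ne_none_iff] at hn
    obtain ⟨⟨hxn, hxz⟩, -, hzy⟩ := hn
    rw [lt_wlen_iff, wmeet_ne_none_iff]
    exact ⟨hxn, fun k hk => (hxz k hk).trans (hzy k hk)⟩

lemma wpre_iff_forall_eq (x y : Word α) :
    wpre x y ↔ ∀ n, x.1 n ≠ none → ∀ k ≤ n, x.1 k = y.1 k := by
  constructor
  · intro h n hxn k hk
    obtain ⟨a, ha⟩ := Option.ne_none_iff_exists'.1 fun hxk => hxn (x.eq_none_of_le_s18 hk hxk)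
    rw [ha, h k a ha]
  · intro h n a ha
    rw [← h n (by simp [ha]) n le_rfl, ha]

lemma wlen_le_wlen_wmeet_iff (x y : Word α) : wlen x ≤ wlen (wmeet x y) ↔ wpre x y := by
  rw [wpre_iff_forall_eq]
  constructor
  · intro h n hxn
    have hn := (lt_wlen_iff _ n).1 (((lt_wlen_iff x n).2 hxn).trans_le h)
    exact ((wmeet_ne_none_iff x y n).1 hn).2
  · intro h
    refine ENat.le_of_forall_natCast_lt fun n hn => ?_
    rw [lt_wlen_iff] at hn ⊢
    exact (wmeet_ne_none_iff x y n).2 ⟨hn, h n hn⟩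

lemma wpre_antisymm {x y : Word α} (hxy : wpre x y) (hyx : wpre y x) : x = y := by
  refine Subtype.ext (funext fun n => ?_)
  cases hx : x.1 n with
  | some a => exact (hxy n a hx).symm
  | none =>
    cases hy : y.1 n with
    | none => rfl
    | some a => simpa [hx] using hyx n a hy

lemma dw_eq_zero_iff (x y : Word α) : dw x y = 0 ↔ wpre x y := by
  rw [dw, tsub_eq_zero_iff_le, pw_strictAnti.le_iff_ge, wlen_le_wlen_wmeet_iff]

lemma dw_triangle (x y z : Word α) : dw x y ≤ dw x z + dw z y := by
  have hx : pw (wlen x) ≤ pw (wlen (wmeet x z)) :=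
    pw_strictAnti.antitone (wlen_wmeet_le_left x z)
  have hz : pw (wlen z) ≤ pw (wlen (wmeet x z)) :=
    pw_strictAnti.antitone (wlen_wmeet_le_right x z)
  have hzy : pw (wlen z) ≤ pw (wlen (wmeet z y)) :=
    pw_strictAnti.antitone (wlen_wmeet_le_left z y)
  rw [dw, dw, dw, tsub_le_iff_right, add_right_comm, tsub_add_cancel_of_le hx]
  rcases min_le_iff.1 (min_wlen_wmeet_le x y z) with h | h
  · exact (pw_strictAnti.antitone h).trans le_self_add
  · calc pw (wlen (wmeet x y)) ≤ pw (wlen (wmeet z y)) := pw_strictAnti.antitone h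
      _ = pw (wlen z) + (pw (wlen (wmeet z y)) - pw (wlen z)) := (add_tsub_cancel_of_le hzy).symm
      _ ≤ _ := by gcongr

end Word

theorem stmt18 {α : Type u} :
    (∀ x y : Word α, (dw x y = 0 ∧ dw y x = 0) ↔ x = y) ∧
    (∀ x y z : Word α, dw x y ≤ dw x z + dw z y) ∧
    (∀ x y : Word α, dw x y = 0 ↔ wpre x y) := by
  refine ⟨fun x y => ?_, Word.dw_triangle, Word.dw_eq_zero_iff⟩
  rw [Word.dw_eq_zero_iff, Word.dw_eq_zero_iff]
  exact ⟨fun ⟨hxy, hyx⟩ => Word.wpre_antisymm hxy hyx,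
    by rintro rfl; exact ⟨fun _ _ h => h, fun _ _ h => h⟩⟩
end
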